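/- Every permutation w ∈ S_n that is an Eeta win in the weak order on S_n consecutively avoids the pattern 1324; that is, there is no index i ∈ [n−3] with w(i) < w(i+2) < w(i+1) < w(i+3). -/

import Mathlib

variable {L : Type*} [Preorder L]

def ungN (x : L) : Set L :=
  {y | ∃ T : Set L, T.Nonempty ∧ (∀ t ∈ T, t ⋖ x) ∧ IsGLB (insert x T) y}

lemma ungN_lt {x y : L} (h : y ∈ ungN x) : y < x := by
  obtain ⟨T, ⟨t, ht⟩, hc, hglb⟩ := h
  exact lt_of_le_of_lt (hglb.1 (Set.mem_insert_of_mem x ht)) (hc t ht).lt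

attribute [local instance] WellFoundedLT.toWellFoundedRelation

mutual
  def atnissWin [WellFoundedLT L] (x : L) : Prop :=
    ∃ y, ∃ _ : y ∈ ungN x, eetaWin y
  termination_by x
  decreasing_by exact ungN_lt ‹_›

  def eetaWin [WellFoundedLT L] (x : L) : Prop :=
    ∀ y, y ∈ ungN x → atnissWin y
  termination_by x
  decreasing_by exact ungN_lt ‹_›
end

/-- The symmetric group on `Fin n`, to be equipped with the (right) weak order. -/
abbrev Weak (n : ℕ) := Equiv.Perm (Fin n)

/-- The set of inversions of a permutation `w`: pairs `(i, j)` with `i < j` and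
`w⁻¹ i > w⁻¹ j`. -/
def invSet {n : ℕ} (w : Weak n) : Finset (Fin n × Fin n) :=
  Finset.univ.filter fun p => p.1 < p.2 ∧ w.symm p.2 < w.symm p.1

/-- The (right) weak order on `S_n`: `u ≤ v` iff every inversion of `u` is an
inversion of `v`. -/
instance {n : ℕ} : Preorder (Weak n) where
  le u v := invSet u ⊆ invSet v
  le_refl u := subset_rfl
  le_trans u v w h1 h2 := fun x hx => h2 (h1 hx)

instance {n : ℕ} : WellFoundedLT (Weak n) := by
  constructor
  have key : ∀ u v : Weak n, u < v → (invSet u).card < (invSet v).card := by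
    intro u v h
    have h' := lt_iff_le_not_ge.mp h
    have hle : invSet u ⊆ invSet v := h'.1
    have hnle : ¬ invSet v ⊆ invSet u := fun hc => h'.2 hc
    exact Finset.card_lt_card (Finset.ssubset_def.mpr ⟨hle, hnle⟩)
  exact Subrelation.wf (fun {u v} h => key u v h)
    (InvImage.wf (fun w => (invSet w).card) Nat.lt_wfRel.wf)

lemma mem_invSet {n : ℕ} {w : Weak n} {p : Fin n × Fin n} :
    p ∈ invSet w ↔ p.1 < p.2 ∧ w.symm p.2 < w.symm p.1 := by
  simp [invSet]

lemma le_def' {n : ℕ} {u v : Weak n} : u ≤ v ↔ invSet u ⊆ invSet v := Iff.rfl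

lemma mul_swap_symm_apply {n : ℕ} (u : Weak n) (k k' : Fin n) (x : Fin n) :
    (u * Equiv.swap k k').symm x = Equiv.swap k k' (u.symm x) := by
  simp [Equiv.Perm.mul_def, Equiv.symm_trans_apply]

lemma invSet_mul_swap {n : ℕ} (u : Weak n) (k k' : Fin n) (hk : (k':ℕ) = (k:ℕ)+1)
    (hd : u k' < u k) :
    invSet (u * Equiv.swap k k') = (invSet u).erase (u k', u k) := by
  ext ⟨a, b⟩
  have ha : u (u.symm a) = a := u.apply_symm_apply a
  have hb : u (u.symm b) = b := u.apply_symm_apply b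
  have hswap : ∀ x : Fin n, ((Equiv.swap k k') x : ℕ) =
      if (x:ℕ) = (k:ℕ) then (k':ℕ) else if (x:ℕ) = (k':ℕ) then (k:ℕ) else (x:ℕ) := by
    intro x
    simp only [Equiv.swap_apply_def]
    split_ifs <;> simp_all [Fin.ext_iff]
  have g1 : a = u k' ↔ (u.symm a : ℕ) = (k' : ℕ) := by
    rw [← Equiv.symm_apply_eq, Fin.ext_iff]
  have g2 : b = u k ↔ (u.symm b : ℕ) = (k : ℕ) := by
    rw [← Equiv.symm_apply_eq, Fin.ext_iff]
  have f1 : ((u.symm a : ℕ) = (k:ℕ) ∧ (u.symm b : ℕ) = (k':ℕ)) → (b:ℕ) < (a:ℕ) := by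
    rintro ⟨x, y⟩
    have hx : u.symm a = k := Fin.ext x
    have hy : u.symm b = k' := Fin.ext y
    have : b < a := by rw [← ha, ← hb, hx, hy]; exact hd
    exact this
  have f2 : ((u.symm a : ℕ) = (k':ℕ) ∧ (u.symm b : ℕ) = (k:ℕ)) → (a:ℕ) < (b:ℕ) := by
    rintro ⟨x, y⟩
    have hx : u.symm a = k' := Fin.ext x
    have hy : u.symm b = k := Fin.ext y
    have : a < b := by rw [← ha, ← hb, hx, hy]; exact hd
    exact this
  simp only [mem_invSet, Finset.mem_erase, mul_swap_symm_apply, Prod.mk.injEq, ne_eq,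
    not_and, Fin.lt_def, hswap, g1, g2]
  split_ifs <;> omega

lemma lt_iff' {n : ℕ} {u v : Weak n} : u < v ↔ invSet u ⊂ invSet v := by
  rw [lt_iff_le_not_ge, Finset.ssubset_def]; exact Iff.rfl

lemma covby_of_erase {n : ℕ} {u t : Weak n} {p : Fin n × Fin n}
    (hp : p ∈ invSet u) (ht : invSet t = (invSet u).erase p) : t ⋖ u := by
  have h1 : t < u := by
    rw [lt_iff', ht]
    exact Finset.erase_ssubset hp
  refine ⟨h1, fun z hz hzu => ?_⟩
  rw [lt_iff'] at hz hzu
  have c1 := Finset.card_lt_card hz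
  have c2 := Finset.card_lt_card hzu
  rw [ht, Finset.card_erase_of_mem hp] at c1
  have : 0 < (invSet u).card := Finset.card_pos.2 ⟨p, hp⟩
  omega

lemma covby_classify {n : ℕ} {u t : Weak n} (h : t ⋖ u) :
    ∃ k k' : Fin n, (k':ℕ) = (k:ℕ)+1 ∧ u k' < u k ∧
      invSet t = (invSet u).erase (u k', u k) := by
  have hlt := h.1
  have hsub : invSet t ⊆ invSet u := hlt.le
  have hS : ((invSet u) \ (invSet t)).Nonempty := by
    rw [lt_iff'] at hlt
    obtain ⟨x, hx1, hx2⟩ := Finset.exists_of_ssubset hlt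
    exact ⟨x, Finset.mem_sdiff.2 ⟨hx1, hx2⟩⟩
  obtain ⟨p, hpS, hmin⟩ := Finset.exists_min_image _
    (fun p => (u.symm p.1 : ℕ) - (u.symm p.2 : ℕ)) hS
  obtain ⟨a, b⟩ := p
  rw [Finset.mem_sdiff] at hpS
  obtain ⟨hpu, hpt⟩ := hpS
  rw [mem_invSet] at hpu
  obtain ⟨hab, hpos⟩ := hpu
  simp only at hab hpos hmin
  -- the gap is 1
  have hgap : (u.symm a : ℕ) = (u.symm b : ℕ) + 1 := by
    by_contra hg
    have hpos' : (u.symm b : ℕ) < (u.symm a : ℕ) := hpos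
    have hlt2 : (u.symm b : ℕ) + 1 < (u.symm a : ℕ) := by omega
    have hmlt : (u.symm b : ℕ) + 1 < n := by have := (u.symm a).isLt; omega
    set m : Fin n := ⟨(u.symm b : ℕ) + 1, hmlt⟩ with hm
    have hmval : (m : ℕ) = (u.symm b : ℕ) + 1 := rfl
    set c := u m with hc
    have hca : c ≠ a := by
      intro hx
      apply hg
      have : m = u.symm a := by rw [← u.symm_apply_apply m, ← hc, hx]
      rw [← this]
    have hcb2 : c ≠ b := by
      intro hx
      have : m = u.symm b := by rw [← u.symm_apply_apply m, ← hc, hx]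
      have := congrArg Fin.val this
      rw [hmval] at this
      omega
    have humc : u.symm c = m := u.symm_apply_apply m
    have hmove : ∀ x y : Fin n, (x, y) ∈ invSet u →
        ((u.symm x : ℕ) - (u.symm y : ℕ)) < ((u.symm a : ℕ) - (u.symm b : ℕ)) →
        (x, y) ∈ invSet t := by
      intro x y hq hlt3
      by_contra hqt
      have h6 := hmin (x, y) (Finset.mem_sdiff.2 ⟨hq, hqt⟩)
      simp only at h6
      omega
    apply hpt
    have goal_mem : t.symm b < t.symm a → (a, b) ∈ invSet t := fun hx =>
      mem_invSet.2 ⟨hab, hx⟩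
    apply goal_mem
    rcases lt_trichotomy c b with hc1 | hc1 | hc1
    · rcases lt_trichotomy c a with hc2 | hc2 | hc2
      · -- c < a : (c,b) ∈ inv t, (c,a) ∉ inv t
        have e1 : (c, b) ∈ invSet t := by
          refine hmove c b (mem_invSet.2 ⟨hc1, ?_⟩) ?_
          · show u.symm b < u.symm c
            rw [humc, Fin.lt_def, hmval]; omega
          · rw [humc, hmval]; omega
        have e1' : t.symm b < t.symm c := (mem_invSet.1 e1).2
        have e2 : (c, a) ∉ invSet t := by
          intro hx
          have h5 : u.symm a < u.symm c := (mem_invSet.1 (hsub hx)).2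
          rw [humc, Fin.lt_def, hmval] at h5
          omega
        have e2' : ¬ (t.symm a < t.symm c) := fun hx => e2 (mem_invSet.2 ⟨hc2, hx⟩)
        push_neg at e2'
        exact lt_of_lt_of_le e1' e2'
      · exact absurd hc2 hca
      · -- a < c < b
        have e1 : (a, c) ∈ invSet t := by
          refine hmove a c (mem_invSet.2 ⟨hc2, ?_⟩) ?_
          · show u.symm c < u.symm a
            rw [humc, Fin.lt_def, hmval]; omega
          · rw [humc, hmval]; omega
        have e2 : (c, b) ∈ invSet t := by
          refine hmove c b (mem_invSet.2 ⟨hc1, ?_⟩) ?_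
          · show u.symm b < u.symm c
            rw [humc, Fin.lt_def, hmval]; omega
          · rw [humc, hmval]; omega
        have e1' : t.symm c < t.symm a := (mem_invSet.1 e1).2
        have e2' : t.symm b < t.symm c := (mem_invSet.1 e2).2
        exact e2'.trans e1'
    · exact absurd hc1 hcb2
    · -- b < c : (a,c) ∈ inv t, (b,c) ∉ inv t
      have e1 : (a, c) ∈ invSet t := by
        refine hmove a c (mem_invSet.2 ⟨hab.trans hc1, ?_⟩) ?_
        · show u.symm c < u.symm a
          rw [humc, Fin.lt_def, hmval]; omega
        · rw [humc, hmval]; omega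
      have e1' : t.symm c < t.symm a := (mem_invSet.1 e1).2
      have e2 : (b, c) ∉ invSet t := by
        intro hx
        have h5 : u.symm c < u.symm b := (mem_invSet.1 (hsub hx)).2
        rw [humc, Fin.lt_def, hmval] at h5
        omega
      have e2' : ¬ (t.symm c < t.symm b) := fun hx => e2 (mem_invSet.2 ⟨hc1, hx⟩)
      push_neg at e2'
      exact lt_of_le_of_lt e2' e1'
  -- now gap is 1
  refine ⟨u.symm b, u.symm a, hgap, ?_, ?_⟩
  · rw [u.apply_symm_apply, u.apply_symm_apply]; exact hab
  · have hinv' : invSet (u * Equiv.swap (u.symm b) (u.symm a)) =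
        (invSet u).erase (u (u.symm a), u (u.symm b)) :=
      invSet_mul_swap u _ _ hgap
        (by rw [u.apply_symm_apply, u.apply_symm_apply]; exact hab)
    apply Finset.Subset.antisymm
    · intro x hx
      rw [Finset.mem_erase]
      refine ⟨?_, hsub hx⟩
      rintro rfl
      rw [u.apply_symm_apply, u.apply_symm_apply] at hx
      exact hpt hx
    · rw [← hinv']
      have ht_le : t ≤ (u * Equiv.swap (u.symm b) (u.symm a)) := by
        intro x hx
        rw [hinv', Finset.mem_erase]
        refine ⟨?_, hsub hx⟩
        rintro rfl
        rw [u.apply_symm_apply, u.apply_symm_apply] at hx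
        exact hpt hx
      have hu'_lt : (u * Equiv.swap (u.symm b) (u.symm a)) < u := by
        rw [lt_iff', hinv']
        apply Finset.erase_ssubset
        rw [u.apply_symm_apply, u.apply_symm_apply]
        exact mem_invSet.2 ⟨hab, hpos⟩
      by_cases hx : t < (u * Equiv.swap (u.symm b) (u.symm a))
      · exact absurd hu'_lt (h.2 hx)
      · rw [lt_iff_le_not_ge] at hx
        push_neg at hx
        exact hx ht_le

lemma not_both {M : Type*} [Preorder M] [WellFoundedLT M] :
    ∀ x : M, eetaWin x → atnissWin x → False := by
  have hwf : WellFounded ((· < ·) : M → M → Prop) := wellFounded_lt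
  intro x
  refine hwf.induction (C := fun x => eetaWin x → atnissWin x → False) x ?_
  intro x IH he ha
  rw [atnissWin] at ha
  obtain ⟨y, hy, hey⟩ := ha
  rw [eetaWin] at he
  exact IH y (ungN_lt hy) hey (he y hy)

lemma main_aux {n : ℕ} (w : Weak n) (hw : eetaWin w) (p0 p1 p2 p3 : Fin n)
    (h01 : (p1:ℕ) = (p0:ℕ)+1) (h12 : (p2:ℕ) = (p1:ℕ)+1) (h23 : (p3:ℕ) = (p2:ℕ)+1)
    (hac : w p0 < w p2) (hcb : w p2 < w p1) (hbd : w p1 < w p3) : False := by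
  have hk12 : (p2:ℕ) = (p1:ℕ) + 1 := h12
  set v : Weak n := w * Equiv.swap p1 p2 with hv
  have hinv_v : invSet v = (invSet w).erase (w p2, w p1) := invSet_mul_swap w p1 p2 hk12 hcb
  have hcb_mem : (w p2, w p1) ∈ invSet w := by
    refine mem_invSet.2 ⟨hcb, ?_⟩
    show w.symm (w p1) < w.symm (w p2)
    rw [w.symm_apply_apply, w.symm_apply_apply, Fin.lt_def]
    omega
  have hvw : v ⋖ w := covby_of_erase hcb_mem hinv_v
  have hv_le : v ≤ w := hvw.1.le
  have hv_mem : v ∈ ungN w := by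
    refine ⟨{v}, ⟨v, rfl⟩, ?_, ?_, ?_⟩
    · intro t ht
      rw [Set.mem_singleton_iff] at ht
      subst ht
      exact hvw
    · intro z hz
      rw [Set.mem_insert_iff] at hz
      rcases hz with rfl | hz
      · exact hv_le
      · rw [Set.mem_singleton_iff] at hz; subst hz; exact le_refl v
    · intro z hz
      exact hz (Set.mem_insert_of_mem _ rfl)
  rw [eetaWin] at hw
  have hav := hw v hv_mem
  rw [atnissWin] at hav
  obtain ⟨v', hv'_mem, hev'⟩ := hav
  obtain ⟨T', hT'ne, hT'cov, hglb⟩ := hv'_mem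
  have hval : ∀ x : Fin n, x ≠ p1 → x ≠ p2 → v x = w x := by
    intro x h1 h2
    rw [hv, Equiv.Perm.mul_apply, Equiv.swap_apply_of_ne_of_ne h1 h2]
  have hv1 : v p1 = w p2 := by rw [hv, Equiv.Perm.mul_apply, Equiv.swap_apply_left]
  have hv2 : v p2 = w p1 := by rw [hv, Equiv.Perm.mul_apply, Equiv.swap_apply_right]
  have hkd : ∀ k k' : Fin n, (k':ℕ) = (k:ℕ)+1 → v k' < v k →
      (v k = w k ∧ v k' = w k' ∧ w k' < w k) := by
    intro k k' hkk hvd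
    have hne1 : k ≠ p1 := by
      rintro rfl
      have hk' : k' = p2 := Fin.ext (by omega)
      rw [hk', hv1, hv2] at hvd
      exact lt_asymm hcb hvd
    have hne0 : k ≠ p0 := by
      rintro rfl
      have hk' : k' = p1 := Fin.ext (by omega)
      have hne01 : k ≠ p1 := by intro hx; have := congrArg Fin.val hx; omega
      have hne02 : k ≠ p2 := by intro hx; have := congrArg Fin.val hx; omega
      rw [hk', hv1, hval _ hne01 hne02] at hvd
      exact lt_asymm hac hvd
    have hne2 : k ≠ p2 := by
      rintro rfl
      have hk' : k' = p3 := Fin.ext (by omega)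
      have hne31 : p3 ≠ p1 := by intro hx; have := congrArg Fin.val hx; omega
      have hne32 : p3 ≠ k := by intro hx; have := congrArg Fin.val hx; omega
      rw [hk', hv2, hval _ hne31 hne32] at hvd
      exact lt_asymm hbd hvd
    have hk'ne1 : k' ≠ p1 := by
      intro hx
      apply hne0
      have := congrArg Fin.val hx
      exact Fin.ext (by omega)
    have hk'ne2 : k' ≠ p2 := by
      intro hx
      apply hne1
      have := congrArg Fin.val hx
      exact Fin.ext (by omega)
    have e1 : v k = w k := hval k hne1 hne2
    have e2 : v k' = w k' := hval k' hk'ne1 hk'ne2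
    rw [e1, e2] at hvd
    exact ⟨e1, e2, hvd⟩
  set T : Set (Weak n) := insert v {s | ∃ t ∈ T', ∃ k k' : Fin n, (k':ℕ) = (k:ℕ)+1 ∧
      v k' < v k ∧ invSet t = (invSet v).erase (v k', v k) ∧ s = w * Equiv.swap k k'} with hT
  have hTcov : ∀ s ∈ T, s ⋖ w := by
    intro s hs
    rw [hT, Set.mem_insert_iff] at hs
    rcases hs with rfl | hs
    · exact hvw
    · obtain ⟨t, ht, k, k', hkk, hvd, hinvt, rfl⟩ := hs
      obtain ⟨e1, e2, e3⟩ := hkd k k' hkk hvd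
      refine covby_of_erase ?_ (invSet_mul_swap w k k' hkk e3)
      refine mem_invSet.2 ⟨e3, ?_⟩
      show w.symm (w k) < w.symm (w k')
      rw [w.symm_apply_apply, w.symm_apply_apply, Fin.lt_def]
      omega
  have hLB : lowerBounds (insert w T) = lowerBounds (insert v T') := by
    ext z
    constructor
    · intro hz s hs
      rw [Set.mem_insert_iff] at hs
      rcases hs with rfl | hs
      · exact hz (Set.mem_insert_of_mem _ (Set.mem_insert _ _))
      · have htcov := hT'cov s hs
        obtain ⟨k, k', hkk, hvd, hinvt⟩ := covby_classify htcov
        obtain ⟨e1, e2, e3⟩ := hkd k k' hkk hvd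
        have hzs : z ≤ w * Equiv.swap k k' := hz (Set.mem_insert_of_mem _
          (Set.mem_insert_of_mem _ ⟨s, hs, k, k', hkk, hvd, hinvt, rfl⟩))
        have hzv : z ≤ v := hz (Set.mem_insert_of_mem _ (Set.mem_insert _ _))
        intro x hx
        rw [hinvt, Finset.mem_erase]
        refine ⟨?_, hzv hx⟩
        have hxs := hzs hx
        rw [invSet_mul_swap w k k' hkk e3, Finset.mem_erase] at hxs
        rw [e1, e2]
        exact hxs.1
    · intro hz s hs
      rw [Set.mem_insert_iff] at hs
      rcases hs with rfl | hs
      · exact le_trans (hz (Set.mem_insert _ _)) hv_le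
      · rw [hT, Set.mem_insert_iff] at hs
        rcases hs with rfl | hs
        · exact hz (Set.mem_insert _ _)
        · obtain ⟨t, ht, k, k', hkk, hvd, hinvt, rfl⟩ := hs
          obtain ⟨e1, e2, e3⟩ := hkd k k' hkk hvd
          have hzt : z ≤ t := hz (Set.mem_insert_of_mem _ ht)
          intro x hx
          have hxt := hzt hx
          rw [hinvt, Finset.mem_erase] at hxt
          rw [invSet_mul_swap w k k' hkk e3, Finset.mem_erase]
          refine ⟨?_, ?_⟩
          · rw [← e1, ← e2]
            exact hxt.1
          · have := hxt.2
            rw [hinv_v] at this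
            exact Finset.mem_of_mem_erase this
  have hv'_w : v' ∈ ungN w := by
    refine ⟨T, ⟨v, Set.mem_insert _ _⟩, hTcov, ?_⟩
    show IsGreatest (lowerBounds (insert w T)) v'
    rw [hLB]
    exact hglb
  exact not_both v' hev' (hw v' hv'_w)

/-- Every Eeta win in the weak order on `S_n` consecutively avoids the pattern `1324`:
there is no index `i` with `w(i) < w(i+2) < w(i+1) < w(i+3)`. -/
theorem eetaWin_consecutively_avoids_1324 {n : ℕ} (w : Weak n) (hw : eetaWin w) :
    ¬ ∃ i, ∃ _ : i + 4 ≤ n,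
      w ⟨i, by omega⟩ < w ⟨i + 2, by omega⟩ ∧
      w ⟨i + 2, by omega⟩ < w ⟨i + 1, by omega⟩ ∧
      w ⟨i + 1, by omega⟩ < w ⟨i + 3, by omega⟩ := by
  rintro ⟨i, h4, hac, hcb, hbd⟩
  exact main_aux w hw ⟨i, by omega⟩ ⟨i+1, by omega⟩ ⟨i+2, by omega⟩ ⟨i+3, by omega⟩
    rfl rfl rfl hac hcb hbd
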